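/- arXiv:1909.08832 — 5 statements merged into one kernel-verified Lean document; each statement's English description precedes it below -/
import Mathlib

section
/- Let ν be a compactly supported Borel measure on [0,1], let γ = (α, β) ∈ [0, π/2)², and define for g ∈ L²(ν) the function f(x) = b·tan(α) + b·x + ∫_{[0,x]} (x − y) g(y) dν(y), where b = −(1 + tan α + tan β)^{-1} · ( tan(β) ∫ g dν + ∫ (1 − y) g(y) dν(y) ). Then f is continuous, f''_{ν} = g in the Kreĭn–Feller sense (i.e., f(x) = f(0) + f'(0)x + ∫_{[0,x]}(x−y)g(y)dν(y) with f(0) = b tan α, f'(0) = b), and f satisfies the Robin boundary conditions f(0)cos α − f'(0) sin α = 0 and f(1) cos β + f'(1) sin β = 0, where f'(1) = f'(0) + ∫_{[0,1]} g dν. -/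
open MeasureTheory Set Filter

/-- Distribution function of a measure on `[0,1]`. -/
noncomputable def Fdist (μ : Measure ℝ) (x : ℝ) : ℝ := (μ (Set.Icc 0 x)).toReal

/-- Pseudo-inverse of the distribution function. -/
noncomputable def Finv (μ : Measure ℝ) (x : ℝ) : ℝ :=
  sInf {y ∈ Set.Icc (0:ℝ) 1 | x ≤ Fdist μ y}

/-- Topological support of a measure. -/
def msupport (μ : Measure ℝ) : Set ℝ := {x | ∀ U : Set ℝ, IsOpen U → x ∈ U → 0 < μ U}

/-!
Writing `(x - y) 𝟙_{[0,x]}(y) = max (x - y) 0` for `y ≥ 0`, the Kreĭn–Feller integral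
`x ↦ ∫_{[0,x]} (x - y) g dν` is `∫ max (x - y) 0 · g dν` over `[0, ∞)`, which is Lipschitz with
constant `‖g‖_{L¹(ν)}` because `max (· - y) 0` is 1-Lipschitz. At `x = 0` the integrand vanishes
on `[0,0]` even if `ν` has an atom there, so `f 0 = b tan α` and the condition at `0` is
`tan α = sin α / cos α`; as `ν` lives on `[0,1]`, `f 1` is `b tan α + b + ∫ (1 - y) g dν`, and the
condition at `1` is the defining equation of `b` multiplied by `cos β`.
-/

theorem lipschitzWith_integral_max_sub_mul {μ : Measure ℝ} {g : ℝ → ℝ} (hg : Integrable g μ)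
    (hint : ∀ x, Integrable (fun y => max (x - y) 0 * g y) μ) :
    LipschitzWith (∫ y, ‖g y‖ ∂μ).toNNReal fun x => ∫ y, max (x - y) 0 * g y ∂μ := by
  refine LipschitzWith.of_dist_le_mul fun x x' => ?_
  rw [Real.dist_eq, Real.dist_eq, Real.coe_toNNReal _ (integral_nonneg fun _ => norm_nonneg _),
    ← integral_sub (hint x) (hint x'), mul_comm, ← integral_const_mul]
  calc |∫ y, max (x - y) 0 * g y - max (x' - y) 0 * g y ∂μ|
      ≤ ∫ y, ‖max (x - y) 0 * g y - max (x' - y) 0 * g y‖ ∂μ := by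
        rw [← Real.norm_eq_abs]; exact norm_integral_le_integral_norm _
    _ ≤ ∫ y, |x - x'| * ‖g y‖ ∂μ := by
        refine integral_mono_of_nonneg (Eventually.of_forall fun _ => norm_nonneg _)
          (hg.norm.const_mul _) (Eventually.of_forall fun y => ?_)
        have hmax := abs_max_sub_max_le_abs (x - y) (x' - y) 0
        rw [sub_sub_sub_cancel_right] at hmax
        simp only [← sub_mul, norm_mul, Real.norm_eq_abs]
        gcongr

theorem integrable_max_sub_mul_restrict_Ici {μ : Measure ℝ} {g : ℝ → ℝ} (hg : Integrable g μ)
    (x : ℝ) : Integrable (fun y => max (x - y) 0 * g y) (μ.restrict (Ici 0)) := by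
  refine Integrable.mono' (hg.restrict.norm.const_mul |x|)
    ((by fun_prop : Continuous fun y : ℝ => max (x - y) 0).aestronglyMeasurable.mul
      hg.restrict.aestronglyMeasurable) ?_
  filter_upwards [ae_restrict_mem measurableSet_Ici] with y (hy : 0 ≤ y)
  rw [norm_mul, Real.norm_eq_abs, abs_of_nonneg (le_max_right _ _)]
  gcongr
  exact max_le (by linarith [le_abs_self x]) (abs_nonneg x)

theorem setIntegral_Icc_sub_mul_eq (μ : Measure ℝ) (g : ℝ → ℝ) (x : ℝ) :
    ∫ y in Icc 0 x, (x - y) * g y ∂μ = ∫ y in Ici 0, max (x - y) 0 * g y ∂μ := by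
  rw [← Ici_inter_Iic, ← setIntegral_indicator measurableSet_Iic]
  congr 1 with y
  by_cases hy : y ≤ x
  · rw [indicator_of_mem (mem_Iic.mpr hy), max_eq_left (sub_nonneg.mpr hy)]
  · rw [indicator_of_notMem (notMem_Iic.mpr (not_le.mp hy)), max_eq_right (by linarith),
      zero_mul]

theorem continuous_setIntegral_Icc_sub_mul {μ : Measure ℝ} {g : ℝ → ℝ} (hg : Integrable g μ) :
    Continuous fun x => ∫ y in Icc 0 x, (x - y) * g y ∂μ := by
  simp_rw [setIntegral_Icc_sub_mul_eq]
  exact (lipschitzWith_integral_max_sub_mul hg.restrict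
    (integrable_max_sub_mul_restrict_Ici hg)).continuous

theorem cos_pos_of_mem_Ico {θ : ℝ} (hθ : θ ∈ Ico 0 (Real.pi / 2)) : 0 < Real.cos θ :=
  Real.cos_pos_of_mem_Ioo ⟨by linarith [Real.pi_pos, hθ.1], hθ.2⟩

theorem tan_nonneg_of_mem_Ico {θ : ℝ} (hθ : θ ∈ Ico 0 (Real.pi / 2)) : 0 ≤ Real.tan θ :=
  Real.tan_nonneg_of_nonneg_of_le_pi_div_two hθ.1 hθ.2.le

theorem stmt_7_general (ν : Measure ℝ) [IsProbabilityMeasure ν]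
    (hνc : ν (Set.Icc (0:ℝ) 1)ᶜ = 0)
    (α β : ℝ) (hα : α ∈ Set.Ico 0 (Real.pi/2)) (hβ : β ∈ Set.Ico 0 (Real.pi/2))
    (g : ℝ → ℝ) (hg : MemLp g 2 ν)
    (b : ℝ)
    (hb : b = -(1 + Real.tan α + Real.tan β)⁻¹ *
        (Real.tan β * ∫ y, g y ∂ν + ∫ y, (1 - y) * g y ∂ν))
    (f : ℝ → ℝ)
    (hf : ∀ x : ℝ, f x = b * Real.tan α + b * x + ∫ y in Set.Icc 0 x, (x - y) * g y ∂ν) :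
    ContinuousOn f (Set.Icc 0 1) ∧
    f 0 = b * Real.tan α ∧
    (∀ x ∈ Set.Icc (0:ℝ) 1,
      f x = f 0 + b * x + ∫ y in Set.Icc 0 x, (x - y) * g y ∂ν) ∧
    f 0 * Real.cos α - b * Real.sin α = 0 ∧
    f 1 * Real.cos β + (b + ∫ y, g y ∂ν) * Real.sin β = 0 := by
  have hf0 : f 0 = b * Real.tan α := by simp [hf]
  have hf1 : f 1 = b * Real.tan α + b + ∫ y, (1 - y) * g y ∂ν := by
    rw [hf, setIntegral_eq_integral_of_ae_compl_eq_zero]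
    · ring
    · filter_upwards [ae_iff.mpr hνc] with y hy hy' using absurd hy hy'
  have hcont : Continuous f := by
    rw [funext hf]
    exact (continuous_const.add (continuous_const.mul continuous_id)).add
      (continuous_setIntegral_Icc_sub_mul (hg.integrable one_le_two))
  have hcosα := (cos_pos_of_mem_Ico hα).ne'
  have hcosβ := (cos_pos_of_mem_Ico hβ).ne'
  have hsum : 1 + Real.tan α + Real.tan β ≠ 0 := by
    linarith [tan_nonneg_of_mem_Ico hα, tan_nonneg_of_mem_Ico hβ]
  refine ⟨hcont.continuousOn, hf0, fun x _ => hf0 ▸ hf x, ?_, ?_⟩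
  · rw [hf0, Real.tan_eq_sin_div_cos]
    field_simp
    ring
  · rw [hf1, ← Real.tan_mul_cos hcosβ, hb]
    field_simp
    ring

theorem stmt_7 (ν : Measure ℝ) [IsProbabilityMeasure ν]
    (hνc : ν (Set.Icc (0:ℝ) 1)ᶜ = 0) (hν0 : ν {(0:ℝ)} = 0) (hν1 : ν {(1:ℝ)} = 0)
    (α β : ℝ) (hα : α ∈ Set.Ico 0 (Real.pi/2)) (hβ : β ∈ Set.Ico 0 (Real.pi/2))
    (g : ℝ → ℝ) (hg : MemLp g 2 ν)
    (b : ℝ)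
    (hb : b = -(1 + Real.tan α + Real.tan β)⁻¹ *
        (Real.tan β * ∫ y, g y ∂ν + ∫ y, (1 - y) * g y ∂ν))
    (f : ℝ → ℝ)
    (hf : ∀ x : ℝ, f x = b * Real.tan α + b * x + ∫ y in Set.Icc 0 x, (x - y) * g y ∂ν) :
    ContinuousOn f (Set.Icc 0 1) ∧
    f 0 = b * Real.tan α ∧
    (∀ x ∈ Set.Icc (0:ℝ) 1,
      f x = f 0 + b * x + ∫ y in Set.Icc 0 x, (x - y) * g y ∂ν) ∧
    f 0 * Real.cos α - b * Real.sin α = 0 ∧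
    f 1 * Real.cos β + (b + ∫ y, g y ∂ν) * Real.sin β = 0 :=
  stmt_7_general ν hνc α β hα hβ g hg b hb f hf
end

section
/- Gauss–Green formula: Let μ be atomless with supp(ν) ⊆ supp(μ). If f, g are in the strong domain of the generalised Kreĭn–Feller operator Δ_{ν,μ}, then ∫ (Δ_{ν,μ} f) g dν = ∇_μ f(1) g(1) − ∇_μ f(0) g(0) − ∫ ∇_μ f · ∇_μ g dμ, where ∇_μ f(x) = ∇_μ f(0) + ∫_{[0,x]} Δ_{ν,μ} f dν. -/
open MeasureTheory Set Filter

/-!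
Write `∇g = b_g + ∫_{[0,·]} g_Δ dν`. By Fubini on the triangle `{t ≤ s}` and atomlessness of `μ`
(so that `μ [t, x] = F_μ(x) - F_μ(t)`), the hypothesis on `g` says `g(x) = g(0) + ∫_{[0,x]} ∇g dμ`.
Expanding `∇f = b_f + ∫_{[0,·]} f_Δ dν` in `∫ ∇f ∇g dμ` and applying Fubini once more turns the
second term into `∫ f_Δ(t) (∫_{[t,1]} ∇g dμ) dν(t) = ∫ f_Δ(t) (g(1) - g(t)) dν(t)`, and the formula
follows by rearranging.
-/

namespace KreinFeller

lemma Fdist_eq_measureReal (μ : Measure ℝ) (x : ℝ) : Fdist μ x = μ.real (Icc 0 x) := rfl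

section TriangleFubini

variable {μ ν : Measure ℝ} {w v : ℝ → ℝ} {a b : ℝ}

noncomputable def triangleKernel (w v : ℝ → ℝ) : ℝ × ℝ → ℝ :=
  {p : ℝ × ℝ | p.2 ≤ p.1}.indicator fun p => w p.1 * v p.2

lemma integrable_triangleKernel (hw : IntegrableOn w (Icc a b) μ)
    (hv : IntegrableOn v (Icc a b) ν) :
    Integrable (triangleKernel w v) ((μ.restrict (Icc a b)).prod (ν.restrict (Icc a b))) :=
  (hw.mul_prod hv).indicator (measurableSet_le measurable_snd measurable_fst)

lemma integral_triangleKernel_left {s : ℝ} (hs : s ≤ b) :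
    ∫ t in Icc a b, triangleKernel w v (s, t) ∂ν = w s * ∫ t in Icc a s, v t ∂ν := by
  have hsection : (fun t => triangleKernel w v (s, t)) = (Iic s).indicator fun t => w s * v t := by
    ext t
    simp [triangleKernel, indicator]
  have hset : Iic s ∩ Icc a b = Icc a s := by
    ext t
    simp only [mem_inter_iff, mem_Iic, mem_Icc]
    grind
  rw [hsection, integral_indicator measurableSet_Iic, Measure.restrict_restrict measurableSet_Iic,
    hset, integral_const_mul]

lemma integral_triangleKernel_right {t : ℝ} (ht : a ≤ t) :
    ∫ s in Icc a b, triangleKernel w v (s, t) ∂μ = v t * ∫ s in Icc t b, w s ∂μ := by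
  have hsection : (fun s => triangleKernel w v (s, t)) = (Ici t).indicator fun s => v t * w s := by
    ext s
    simp [triangleKernel, indicator, mul_comm]
  have hset : Ici t ∩ Icc a b = Icc t b := by
    ext s
    simp only [mem_inter_iff, mem_Ici, mem_Icc]
    grind
  rw [hsection, integral_indicator measurableSet_Ici, Measure.restrict_restrict measurableSet_Ici,
    hset, integral_const_mul]

variable [SFinite ν]

lemma integrableOn_mul_setIntegral_Icc_left (hw : IntegrableOn w (Icc a b) μ)
    (hv : IntegrableOn v (Icc a b) ν) :
    IntegrableOn (fun s => w s * ∫ t in Icc a s, v t ∂ν) (Icc a b) μ :=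
  (integrable_triangleKernel hw hv).integral_prod_left.congr <|
    ae_restrict_of_forall_mem measurableSet_Icc fun _ hs => integral_triangleKernel_left hs.2

lemma integrableOn_setIntegral_Icc [IsFiniteMeasure μ] (hv : IntegrableOn v (Icc a b) ν) :
    IntegrableOn (fun s => ∫ t in Icc a s, v t ∂ν) (Icc a b) μ := by
  simpa only [one_mul] using
    integrableOn_mul_setIntegral_Icc_left (integrableOn_const (C := 1) (by finiteness)) hv

variable [SFinite μ]

theorem setIntegral_mul_setIntegral_Icc_comm (hw : IntegrableOn w (Icc a b) μ)
    (hv : IntegrableOn v (Icc a b) ν) :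
    ∫ s in Icc a b, w s * (∫ t in Icc a s, v t ∂ν) ∂μ =
      ∫ t in Icc a b, v t * (∫ s in Icc t b, w s ∂μ) ∂ν :=
  calc _ = ∫ s in Icc a b, ∫ t in Icc a b, triangleKernel w v (s, t) ∂ν ∂μ :=
        setIntegral_congr_fun measurableSet_Icc fun _ hs => (integral_triangleKernel_left hs.2).symm
    _ = ∫ t in Icc a b, ∫ s in Icc a b, triangleKernel w v (s, t) ∂μ ∂ν :=
        integral_integral_swap (integrable_triangleKernel hw hv)
    _ = _ := setIntegral_congr_fun measurableSet_Icc fun _ ht => integral_triangleKernel_right ht.1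

lemma integrableOn_mul_setIntegral_Icc_right (hw : IntegrableOn w (Icc a b) μ)
    (hv : IntegrableOn v (Icc a b) ν) :
    IntegrableOn (fun t => v t * ∫ s in Icc t b, w s ∂μ) (Icc a b) ν :=
  (integrable_triangleKernel hw hv).integral_prod_right.congr <|
    ae_restrict_of_forall_mem measurableSet_Icc fun _ ht => integral_triangleKernel_right ht.1

theorem setIntegral_setIntegral_Icc_comm [IsFiniteMeasure μ] (hv : IntegrableOn v (Icc a b) ν) :
    ∫ s in Icc a b, (∫ t in Icc a s, v t ∂ν) ∂μ = ∫ t in Icc a b, v t * μ.real (Icc t b) ∂ν := by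
  simpa only [one_mul, setIntegral_const, smul_eq_mul, mul_one] using
    setIntegral_mul_setIntegral_Icc_comm (integrableOn_const (C := 1) (by finiteness)) hv

end TriangleFubini

section Atomless

variable {μ : Measure ℝ} [NullSingletonClass μ]

theorem setIntegral_Icc_add_setIntegral_Icc {f : ℝ → ℝ} {a b c : ℝ} (hab : a ≤ b) (hbc : b ≤ c)
    (hf : IntegrableOn f (Icc a c) μ) :
    ∫ x in Icc a b, f x ∂μ + ∫ x in Icc b c, f x ∂μ = ∫ x in Icc a c, f x ∂μ := by
  rw [integral_Icc_eq_integral_Ico, ← setIntegral_union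
    ((Iio_disjoint_Ici le_rfl).mono Ico_subset_Iio_self Icc_subset_Ici_self) measurableSet_Icc
    (hf.mono_set (Ico_subset_Icc_self.trans (Icc_subset_Icc_right hbc)))
    (hf.mono_set (Icc_subset_Icc_left hab)), Ico_union_Icc_eq_Icc hab hbc]

lemma measureReal_Icc_eq_Fdist_sub [IsFiniteMeasure μ] {s t : ℝ} (hs : 0 ≤ s) (hst : s ≤ t) :
    μ.real (Icc s t) = Fdist μ t - Fdist μ s := by
  have := setIntegral_Icc_add_setIntegral_Icc (μ := μ) (f := fun _ => (1 : ℝ)) hs hst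
    (integrableOn_const (by finiteness))
  simp only [setIntegral_const, smul_eq_mul, mul_one] at this
  rw [Fdist_eq_measureReal, Fdist_eq_measureReal]
  linarith

end Atomless

/-- `∇_μ f` for `f` with `Δ_{ν,μ} f = h` and `∇_μ f(0) = b`. -/
noncomputable def kreinFellerGrad (ν : Measure ℝ) (b : ℝ) (h : ℝ → ℝ) (x : ℝ) : ℝ :=
  b + ∫ t in Icc 0 x, h t ∂ν

section Domain

variable {μ ν : Measure ℝ} [IsFiniteMeasure μ] [IsFiniteMeasure ν] {h : ℝ → ℝ} {b : ℝ}

lemma integrableOn_kreinFellerGrad {x : ℝ} (hh : IntegrableOn h (Icc 0 x) ν) :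
    IntegrableOn (kreinFellerGrad ν b h) (Icc 0 x) μ :=
  (integrable_const b).add (integrableOn_setIntegral_Icc hh)

variable [NullSingletonClass μ] {g : ℝ → ℝ}
  (hg : ∀ x ∈ Icc (0:ℝ) 1,
    g x = g 0 + b * Fdist μ x + ∫ y in Icc 0 x, (Fdist μ x - Fdist μ y) * h y ∂ν)
  (hh : IntegrableOn h (Icc 0 1) ν)
include hg hh

theorem eq_add_setIntegral_kreinFellerGrad {x : ℝ} (hx : x ∈ Icc (0:ℝ) 1) : g x = g 0 + ∫ s in Icc 0 x, kreinFellerGrad ν b h s ∂μ := by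
  have hhx : IntegrableOn h (Icc 0 x) ν := hh.mono_set (Icc_subset_Icc_right hx.2)
  unfold kreinFellerGrad
  rw [hg x hx, integral_add (integrable_const b) (integrableOn_setIntegral_Icc hhx),
    setIntegral_setIntegral_Icc_comm hhx, setIntegral_const, smul_eq_mul,
    ← Fdist_eq_measureReal, add_assoc, mul_comm b]
  congr 2
  refine setIntegral_congr_fun measurableSet_Icc fun t ht => ?_
  rw [measureReal_Icc_eq_Fdist_sub ht.1 ht.2, mul_comm]

theorem setIntegral_Icc_kreinFellerGrad {t : ℝ} (ht : t ∈ Icc (0:ℝ) 1) :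
    ∫ s in Icc t 1, kreinFellerGrad ν b h s ∂μ = g 1 - g t := by
  rw [eq_add_setIntegral_kreinFellerGrad hg hh ⟨zero_le_one, le_rfl⟩,
    eq_add_setIntegral_kreinFellerGrad hg hh ht,
    ← setIntegral_Icc_add_setIntegral_Icc ht.1 ht.2 (integrableOn_kreinFellerGrad hh)]
  ring

variable {v : ℝ → ℝ} (hv : IntegrableOn v (Icc 0 1) ν)
include hv

theorem setIntegral_kreinFellerGrad_mul_setIntegral :
    ∫ s in Icc 0 1, kreinFellerGrad ν b h s * (∫ t in Icc 0 s, v t ∂ν) ∂μ =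
      ∫ t in Icc 0 1, v t * (g 1 - g t) ∂ν := by
  rw [setIntegral_mul_setIntegral_Icc_comm (integrableOn_kreinFellerGrad hh) hv]
  exact setIntegral_congr_fun measurableSet_Icc fun t ht =>
    congrArg (v t * ·) (setIntegral_Icc_kreinFellerGrad hg hh ht)

lemma integrableOn_mul_apply_one_sub :
    IntegrableOn (fun t => v t * (g 1 - g t)) (Icc 0 1) ν :=
  (integrableOn_mul_setIntegral_Icc_right (integrableOn_kreinFellerGrad (μ := μ) hh) hv).congr_fun
    (fun t ht => congrArg (v t * ·) (setIntegral_Icc_kreinFellerGrad hg hh ht)) measurableSet_Icc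

end Domain

end KreinFeller

open KreinFeller

theorem stmt_9_general (μ ν : Measure ℝ) [IsProbabilityMeasure μ] [IsProbabilityMeasure ν] [NullSingletonClass μ]
    (g fΔ gΔ : ℝ → ℝ) (bf bg : ℝ) (hfΔ : Continuous fΔ) (hgΔ : Continuous gΔ)
    (hg : ∀ x ∈ Set.Icc (0:ℝ) 1,
      g x = g 0 + bg * Fdist μ x + ∫ y in Set.Icc 0 x, (Fdist μ x - Fdist μ y) * gΔ y ∂ν) :
    ∫ y in Set.Icc (0:ℝ) 1, fΔ y * g y ∂ν =
      (bf + ∫ y in Set.Icc (0:ℝ) 1, fΔ y ∂ν) * g 1 - bf * g 0 -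
        ∫ y in Set.Icc (0:ℝ) 1,
          (bf + ∫ t in Set.Icc 0 y, fΔ t ∂ν) * (bg + ∫ t in Set.Icc 0 y, gΔ t ∂ν) ∂μ := by
  have hfΔI : IntegrableOn fΔ (Icc 0 1) ν := hfΔ.integrableOn_Icc
  have hgΔI : IntegrableOn gΔ (Icc 0 1) ν := hgΔ.integrableOn_Icc
  have hgradgrad :
      ∫ y in Icc 0 1, (bf + ∫ t in Icc 0 y, fΔ t ∂ν) * kreinFellerGrad ν bg gΔ y ∂μ =
        bf * (g 1 - g 0) + ∫ t in Icc 0 1, fΔ t * (g 1 - g t) ∂ν := by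
    have hgradI : IntegrableOn (kreinFellerGrad ν bg gΔ) (Icc 0 1) μ :=
      integrableOn_kreinFellerGrad hgΔI
    rw [← setIntegral_kreinFellerGrad_mul_setIntegral hg hgΔI hfΔI,
      ← setIntegral_Icc_kreinFellerGrad hg hgΔI ⟨le_rfl, zero_le_one⟩, ← integral_const_mul,
      ← integral_add (hgradI.const_mul bf) (integrableOn_mul_setIntegral_Icc_left hgradI hfΔI)]
    congr 1 with y
    ring
  have hsplit : ∫ y in Icc 0 1, fΔ y * g y ∂ν =
      g 1 * (∫ y in Icc 0 1, fΔ y ∂ν) - ∫ t in Icc 0 1, fΔ t * (g 1 - g t) ∂ν := by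
    rw [← integral_const_mul, ← integral_sub (hfΔI.const_mul _)
      (integrableOn_mul_apply_one_sub (μ := μ) hg hgΔI hfΔI)]
    congr 1 with y
    ring
  change _ = _ - _ - ∫ y in Icc 0 1, (bf + ∫ t in Icc 0 y, fΔ t ∂ν) * kreinFellerGrad ν bg gΔ y ∂μ
  rw [hgradgrad, hsplit]
  ring

theorem stmt_9 (μ ν : Measure ℝ) [IsProbabilityMeasure μ] [IsProbabilityMeasure ν] [NullSingletonClass μ]
    (hμc : μ (Set.Icc (0:ℝ) 1)ᶜ = 0) (hνc : ν (Set.Icc (0:ℝ) 1)ᶜ = 0)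
    (hν0 : ν {(0:ℝ)} = 0) (hν1 : ν {(1:ℝ)} = 0)
    (hsupp : msupport ν ⊆ msupport μ)
    (f g fΔ gΔ : ℝ → ℝ) (bf bg : ℝ) (hfΔ : Continuous fΔ) (hgΔ : Continuous gΔ)
    (hf : ∀ x ∈ Set.Icc (0:ℝ) 1,
      f x = f 0 + bf * Fdist μ x + ∫ y in Set.Icc 0 x, (Fdist μ x - Fdist μ y) * fΔ y ∂ν)
    (hg : ∀ x ∈ Set.Icc (0:ℝ) 1,
      g x = g 0 + bg * Fdist μ x + ∫ y in Set.Icc 0 x, (Fdist μ x - Fdist μ y) * gΔ y ∂ν) :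
    ∫ y in Set.Icc (0:ℝ) 1, fΔ y * g y ∂ν =
      (bf + ∫ y in Set.Icc (0:ℝ) 1, fΔ y ∂ν) * g 1 - bf * g 0 -
        ∫ y in Set.Icc (0:ℝ) 1,
          (bf + ∫ t in Set.Icc 0 y, fΔ t ∂ν) * (bg + ∫ t in Set.Icc 0 y, gΔ t ∂ν) ∂μ :=
  stmt_9_general μ ν g fΔ gΔ bf bg hfΔ hgΔ hg
end

section
/- With the Gauss–Green formula in force and Robin boundary conditions f(0)cos α − ∇_μ f(0)sin α = 0 and f(1)cos β + ∇_μ f(1)sin β = 0 for γ = (α,β) ∈ [0,π/2]², the operator Δ_{ν,μ} is symmetric on its domain with boundary conditions: ∫ (Δ_{ν,μ} f) g dν = ∫ (Δ_{ν,μ} g) f dν for all f, g in the domain satisfying the boundary conditions. -/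
/-!
Write `K(x, y) = 1_{y ≤ x} (F x - F y)` with `F = F_μ`, so that
`g = g(0) + ∇g(0) F + ∫ K(·, y) Δg(y) dν(y)` on `[0, 1]`. Pairing with `Δf` gives
`∫ Δf g dν = g(0) ∫ Δf + ∇g(0) ∫ F Δf + ∬ K(x, y) Δf(x) Δg(y)`. Since
`K(x, y) - K(y, x) = F x - F y`, the antisymmetric part of the double integral splits into
products of single integrals, and the representation of `f`, `g` at `x = 1` (where `F = 1`)
turns `∫ Δf g - ∫ Δg f` into the boundary Wronskian `[∇f g - ∇g f]₀¹`. At each endpoint the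
Robin condition makes `(f, ∇f)` and `(g, ∇g)` orthogonal to the same nonzero vector
`(cos, ∓ sin)`, so both Wronskians vanish.
-/

open MeasureTheory Set Filter

noncomputable def volterraKernel (F : ℝ → ℝ) (x y : ℝ) : ℝ := if y ≤ x then F x - F y else 0

section VolterraKernel

variable {F : ℝ → ℝ}

lemma volterraKernel_sub_volterraKernel_swap (x y : ℝ) :
    volterraKernel F x y - volterraKernel F y x = F x - F y := by
  rcases lt_trichotomy x y with h | rfl | h
  · simp [volterraKernel, h.le, h.not_ge]
  · simp [volterraKernel]
  · simp [volterraKernel, h.le, h.not_ge]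

lemma norm_volterraKernel_le {C : ℝ} (hF : ∀ x, ‖F x‖ ≤ C) (x y : ℝ) :
    ‖volterraKernel F x y‖ ≤ 2 * C := by
  unfold volterraKernel
  split_ifs
  · linarith [norm_sub_le (F x) (F y), hF x, hF y]
  · simpa using (norm_nonneg _).trans (hF x)

lemma measurable_volterraKernel (hF : Measurable F) :
    Measurable fun p : ℝ × ℝ => volterraKernel F p.1 p.2 :=
  Measurable.ite (measurableSet_le measurable_snd measurable_fst)
    ((hF.comp measurable_fst).sub (hF.comp measurable_snd)) measurable_const

lemma setIntegral_Icc_sub_mul_eq_setIntegral_volterraKernel_mul (ν : Measure ℝ) (h : ℝ → ℝ)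
    {a b x : ℝ} (hx : x ≤ b) :
    ∫ y in Icc a x, (F x - F y) * h y ∂ν = ∫ y in Icc a b, volterraKernel F x y * h y ∂ν := by
  have hK : (fun y => volterraKernel F x y * h y)
      = (Iic x).indicator fun y => (F x - F y) * h y := by
    ext y
    by_cases hy : y ≤ x <;> simp [volterraKernel, hy]
  have hIcc : Icc a b ∩ Iic x = Icc a x := by
    ext y
    simp only [mem_inter_iff, mem_Icc, mem_Iic]
    constructor
    · exact fun ⟨⟨hay, _⟩, hyx⟩ => ⟨hay, hyx⟩
    · exact fun ⟨hay, hyx⟩ => ⟨⟨hay, hyx.trans hx⟩, hyx⟩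
  rw [hK, setIntegral_indicator measurableSet_Iic, hIcc]

variable {ρ : Measure ℝ} {C : ℝ} {φ ψ : ℝ → ℝ}

lemma integrable_volterraKernel_mul_mul (hFm : Measurable F) (hF : ∀ x, ‖F x‖ ≤ C)
    (hφ : Integrable φ ρ) (hψ : Integrable ψ ρ) :
    Integrable (fun p : ℝ × ℝ => volterraKernel F p.1 p.2 * (φ p.1 * ψ p.2)) (ρ.prod ρ) :=
  (hφ.mul_prod hψ).bdd_mul (measurable_volterraKernel hFm).aestronglyMeasurable
    (ae_of_all _ fun p => norm_volterraKernel_le hF p.1 p.2)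

variable [SFinite ρ]

lemma integral_volterraKernel_mul_mul_sub_swap (hFm : Measurable F) (hF : ∀ x, ‖F x‖ ≤ C)
    (hφ : Integrable φ ρ) (hψ : Integrable ψ ρ) :
    ∫ p, volterraKernel F p.1 p.2 * (φ p.1 * ψ p.2) ∂(ρ.prod ρ)
      - ∫ p, volterraKernel F p.1 p.2 * (ψ p.1 * φ p.2) ∂(ρ.prod ρ)
      = (∫ x, F x * φ x ∂ρ) * ∫ x, ψ x ∂ρ - (∫ x, φ x ∂ρ) * ∫ x, F x * ψ x ∂ρ := by
  have hFφ : Integrable (fun x => F x * φ x) ρ :=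
    hφ.bdd_mul hFm.aestronglyMeasurable (ae_of_all _ hF)
  have hFψ : Integrable (fun x => F x * ψ x) ρ :=
    hψ.bdd_mul hFm.aestronglyMeasurable (ae_of_all _ hF)
  have hswap : ∫ p, volterraKernel F p.1 p.2 * (ψ p.1 * φ p.2) ∂(ρ.prod ρ)
      = ∫ p, volterraKernel F p.2 p.1 * (ψ p.2 * φ p.1) ∂(ρ.prod ρ) :=
    (integral_prod_swap _).symm
  have hantisymm : ∀ p : ℝ × ℝ, volterraKernel F p.1 p.2 * (φ p.1 * ψ p.2)
      - volterraKernel F p.2 p.1 * (ψ p.2 * φ p.1)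
      = F p.1 * φ p.1 * ψ p.2 - φ p.1 * (F p.2 * ψ p.2) := fun p => by
    linear_combination φ p.1 * ψ p.2 * volterraKernel_sub_volterraKernel_swap (F := F) p.1 p.2
  have hK'swap : Integrable (fun p : ℝ × ℝ => volterraKernel F p.2 p.1 * (ψ p.2 * φ p.1))
      (ρ.prod ρ) :=
    (integrable_volterraKernel_mul_mul hFm hF hψ hφ).swap
  rw [hswap, ← integral_sub (integrable_volterraKernel_mul_mul hFm hF hφ hψ) hK'swap,
    integral_congr_ae (ae_of_all _ hantisymm),
    integral_sub (hFφ.mul_prod hψ) (hφ.mul_prod hFψ), integral_prod_mul (fun x => F x * φ x) ψ,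
    integral_prod_mul φ (fun x => F x * ψ x)]

lemma integral_mul_eq_of_ae_eq_volterra (hFm : Measurable F) (hF : ∀ x, ‖F x‖ ≤ C)
    (hφ : Integrable φ ρ) (hψ : Integrable ψ ρ) {v : ℝ → ℝ} {v₀ b : ℝ}
    (hv : ∀ᵐ x ∂ρ, v x = v₀ + b * F x + ∫ y, volterraKernel F x y * ψ y ∂ρ) :
    ∫ x, φ x * v x ∂ρ = v₀ * (∫ x, φ x ∂ρ) + b * (∫ x, F x * φ x ∂ρ)
      + ∫ p, volterraKernel F p.1 p.2 * (φ p.1 * ψ p.2) ∂(ρ.prod ρ) := by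
  have hFφ : Integrable (fun x => F x * φ x) ρ :=
    hφ.bdd_mul hFm.aestronglyMeasurable (ae_of_all _ hF)
  have hK := integrable_volterraKernel_mul_mul hFm hF hφ hψ
  have hlin : Integrable (fun x => v₀ * φ x + b * (F x * φ x)) ρ :=
    (hφ.const_mul v₀).add (hFφ.const_mul b)
  calc ∫ x, φ x * v x ∂ρ
      = ∫ x, (v₀ * φ x + b * (F x * φ x) + ∫ y, volterraKernel F x y * (φ x * ψ y) ∂ρ) ∂ρ := by
        refine integral_congr_ae (hv.mono fun x hx => ?_)
        simp only [hx, mul_left_comm _ (φ x), integral_const_mul]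
        ring
    _ = _ := by
        rw [integral_add hlin hK.integral_prod_left,
          integral_add (hφ.const_mul v₀) (hFφ.const_mul b), integral_const_mul, integral_const_mul,
          integral_prod _ hK]

end VolterraKernel

lemma measurable_Fdist (μ : Measure ℝ) [IsFiniteMeasure μ] : Measurable (Fdist μ) :=
  Monotone.measurable fun _ _ hxy =>
    ENNReal.toReal_mono (measure_ne_top μ _) (measure_mono (Icc_subset_Icc_right hxy))

lemma norm_Fdist_le_one (μ : Measure ℝ) [IsProbabilityMeasure μ] (x : ℝ) : ‖Fdist μ x‖ ≤ 1 := by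
  rw [Fdist, Real.norm_of_nonneg ENNReal.toReal_nonneg]
  exact measureReal_le_one

lemma Fdist_one {μ : Measure ℝ} [IsProbabilityMeasure μ] (hμ : μ (Icc (0:ℝ) 1)ᶜ = 0) :
    Fdist μ 1 = 1 := by
  simp [Fdist, (prob_compl_eq_zero_iff measurableSet_Icc).1 hμ]

section GreenFormula

variable {μ ν : Measure ℝ} {u uΔ : ℝ → ℝ} {bu : ℝ}

lemma ae_restrict_Icc_eq_volterra
    (hu : ∀ x ∈ Icc (0:ℝ) 1,
      u x = u 0 + bu * Fdist μ x + ∫ y in Icc 0 x, (Fdist μ x - Fdist μ y) * uΔ y ∂ν) :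
    ∀ᵐ x ∂(ν.restrict (Icc 0 1)),
      u x = u 0 + bu * Fdist μ x + ∫ y in Icc 0 1, volterraKernel (Fdist μ) x y * uΔ y ∂ν :=
  ae_restrict_of_forall_mem measurableSet_Icc fun x hx => by
    rw [hu x hx, setIntegral_Icc_sub_mul_eq_setIntegral_volterraKernel_mul ν uΔ hx.2]

lemma setIntegral_Fdist_mul_eq [IsProbabilityMeasure μ] (hμ : μ (Icc (0:ℝ) 1)ᶜ = 0)
    (huΔ : IntegrableOn uΔ (Icc 0 1) ν)
    (hu1 : u 1 = u 0 + bu * Fdist μ 1 + ∫ y in Icc 0 1, (Fdist μ 1 - Fdist μ y) * uΔ y ∂ν) :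
    ∫ y in Icc 0 1, Fdist μ y * uΔ y ∂ν = u 0 + bu + (∫ y in Icc 0 1, uΔ y ∂ν) - u 1 := by
  have hFuΔ : IntegrableOn (fun y => Fdist μ y * uΔ y) (Icc 0 1) ν :=
    huΔ.bdd_mul (measurable_Fdist μ).aestronglyMeasurable (ae_of_all _ (norm_Fdist_le_one μ))
  simp only [Fdist_one hμ, sub_mul, one_mul] at hu1
  rw [integral_sub huΔ hFuΔ] at hu1
  linarith

lemma setIntegral_mul_sub_setIntegral_mul_eq [IsProbabilityMeasure μ] [SFinite ν]
    (hμ : μ (Icc (0:ℝ) 1)ᶜ = 0) {f g fΔ gΔ : ℝ → ℝ} {bf bg : ℝ}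
    (hfΔ : IntegrableOn fΔ (Icc 0 1) ν) (hgΔ : IntegrableOn gΔ (Icc 0 1) ν)
    (hf : ∀ x ∈ Icc (0:ℝ) 1,
      f x = f 0 + bf * Fdist μ x + ∫ y in Icc 0 x, (Fdist μ x - Fdist μ y) * fΔ y ∂ν)
    (hg : ∀ x ∈ Icc (0:ℝ) 1,
      g x = g 0 + bg * Fdist μ x + ∫ y in Icc 0 x, (Fdist μ x - Fdist μ y) * gΔ y ∂ν) :
    ∫ y in Icc 0 1, fΔ y * g y ∂ν - ∫ y in Icc 0 1, gΔ y * f y ∂ν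
      = ((bf + ∫ y in Icc 0 1, fΔ y ∂ν) * g 1 - (bg + ∫ y in Icc 0 1, gΔ y ∂ν) * f 1)
        - (bf * g 0 - bg * f 0) := by
  have hFm := measurable_Fdist μ
  have hF := norm_Fdist_le_one μ
  have hfg := integral_mul_eq_of_ae_eq_volterra hFm hF hfΔ hgΔ (ae_restrict_Icc_eq_volterra hg)
  have hgf := integral_mul_eq_of_ae_eq_volterra hFm hF hgΔ hfΔ (ae_restrict_Icc_eq_volterra hf)
  have hswap := integral_volterraKernel_mul_mul_sub_swap hFm hF hfΔ hgΔ
  have hf1 := setIntegral_Fdist_mul_eq hμ hfΔ (hf 1 ⟨zero_le_one, le_rfl⟩)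
  have hg1 := setIntegral_Fdist_mul_eq hμ hgΔ (hg 1 ⟨zero_le_one, le_rfl⟩)
  rw [hfg, hgf]
  linear_combination hswap + (bg + ∫ y in Icc 0 1, gΔ y ∂ν) * hf1
    - (bf + ∫ y in Icc 0 1, fΔ y ∂ν) * hg1

end GreenFormula

lemma mul_sub_mul_eq_zero_of_cos_sin {θ u₁ v₁ u₂ v₂ : ℝ}
    (h₁ : u₁ * Real.cos θ + v₁ * Real.sin θ = 0) (h₂ : u₂ * Real.cos θ + v₂ * Real.sin θ = 0) :
    u₁ * v₂ - u₂ * v₁ = 0 := by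
  linear_combination (Real.cos θ * v₂ - Real.sin θ * u₂) * h₁
    + (Real.sin θ * u₁ - Real.cos θ * v₁) * h₂ - (u₁ * v₂ - u₂ * v₁) * Real.sin_sq_add_cos_sq θ

theorem stmt_10_general (μ ν : Measure ℝ) [IsProbabilityMeasure μ] [IsProbabilityMeasure ν]
    (hμc : μ (Set.Icc (0:ℝ) 1)ᶜ = 0)
    (f g fΔ gΔ : ℝ → ℝ) (bf bg : ℝ) (hfΔ : Continuous fΔ) (hgΔ : Continuous gΔ)
    (hf : ∀ x ∈ Set.Icc (0:ℝ) 1,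
      f x = f 0 + bf * Fdist μ x + ∫ y in Set.Icc 0 x, (Fdist μ x - Fdist μ y) * fΔ y ∂ν)
    (hg : ∀ x ∈ Set.Icc (0:ℝ) 1,
      g x = g 0 + bg * Fdist μ x + ∫ y in Set.Icc 0 x, (Fdist μ x - Fdist μ y) * gΔ y ∂ν)
    (α β : ℝ)
    (hfbc0 : f 0 * Real.cos α - bf * Real.sin α = 0)
    (hfbc1 : f 1 * Real.cos β + (bf + ∫ y in Set.Icc (0:ℝ) 1, fΔ y ∂ν) * Real.sin β = 0)
    (hgbc0 : g 0 * Real.cos α - bg * Real.sin α = 0)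
    (hgbc1 : g 1 * Real.cos β + (bg + ∫ y in Set.Icc (0:ℝ) 1, gΔ y ∂ν) * Real.sin β = 0) :
    ∫ y in Set.Icc (0:ℝ) 1, fΔ y * g y ∂ν = ∫ y in Set.Icc (0:ℝ) 1, gΔ y * f y ∂ν := by
  have green := setIntegral_mul_sub_setIntegral_mul_eq hμc hfΔ.integrableOn_Icc
    hgΔ.integrableOn_Icc hf hg
  have wronskian₀ := mul_sub_mul_eq_zero_of_cos_sin (θ := α) (u₁ := f 0) (v₁ := -bf)
    (u₂ := g 0) (v₂ := -bg) (by linear_combination hfbc0) (by linear_combination hgbc0)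
  have wronskian₁ := mul_sub_mul_eq_zero_of_cos_sin hfbc1 hgbc1
  linear_combination green - wronskian₁ - wronskian₀

theorem stmt_10 (μ ν : Measure ℝ) [IsProbabilityMeasure μ] [IsProbabilityMeasure ν] [NullSingletonClass μ]
    (hμc : μ (Set.Icc (0:ℝ) 1)ᶜ = 0) (hνc : ν (Set.Icc (0:ℝ) 1)ᶜ = 0)
    (hν0 : ν {(0:ℝ)} = 0) (hν1 : ν {(1:ℝ)} = 0)
    (hsupp : msupport ν ⊆ msupport μ)
    (f g fΔ gΔ : ℝ → ℝ) (bf bg : ℝ) (hfΔ : Continuous fΔ) (hgΔ : Continuous gΔ)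
    (hf : ∀ x ∈ Set.Icc (0:ℝ) 1,
      f x = f 0 + bf * Fdist μ x + ∫ y in Set.Icc 0 x, (Fdist μ x - Fdist μ y) * fΔ y ∂ν)
    (hg : ∀ x ∈ Set.Icc (0:ℝ) 1,
      g x = g 0 + bg * Fdist μ x + ∫ y in Set.Icc 0 x, (Fdist μ x - Fdist μ y) * gΔ y ∂ν)
    (α β : ℝ) (hα : α ∈ Set.Icc 0 (Real.pi/2)) (hβ : β ∈ Set.Icc 0 (Real.pi/2))
    (hfbc0 : f 0 * Real.cos α - bf * Real.sin α = 0)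
    (hfbc1 : f 1 * Real.cos β + (bf + ∫ y in Set.Icc (0:ℝ) 1, fΔ y ∂ν) * Real.sin β = 0)
    (hgbc0 : g 0 * Real.cos α - bg * Real.sin α = 0)
    (hgbc1 : g 1 * Real.cos β + (bg + ∫ y in Set.Icc (0:ℝ) 1, gΔ y ∂ν) * Real.sin β = 0) :
    ∫ y in Set.Icc (0:ℝ) 1, fΔ y * g y ∂ν = ∫ y in Set.Icc (0:ℝ) 1, gΔ y * f y ∂ν :=
  stmt_10_general μ ν hμc f g fΔ gΔ bf bg hfΔ hgΔ hf hg α β hfbc0 hfbc1 hgbc0 hgbc1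
end

section
/- With boundary conditions and the Gauss–Green formula, Δ_{ν,μ} is non-positive: for every f in the domain of Δ_{ν,μ} satisfying the Robin boundary conditions with γ ∈ [0,π/2]², one has ∫ (Δ_{ν,μ} f) f dν ≤ 0. -/
/-!
Put `H t = ∫_{[0,t]} Δf dν`. Fubini, together with `μ [y, x] = F x - F y` (μ has no atoms), turns
the Kreĭn–Feller representation of `f` into `f x = f 0 + ∫_{[0,x]} (∇f(0) + H) dμ`. A second
application of Fubini gives the Gauss–Green formula
`∫ Δf · f dν = f(1) ∇f(1) - f(0) ∇f(0) - ∫ (∇f(0) + H)² dμ`; here `∫_{[t,1]} Δf dν = H 1 - H t`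
can fail only at the atoms of ν, which are countably many and hence μ-null. For angles in
`[0, π/2]` the Robin conditions make `f(0) ∇f(0) ≥ 0` and `f(1) ∇f(1) ≤ 0`.
-/

open MeasureTheory Set Filter

section Triangle

variable {μ ν : Measure ℝ} {a b : ℝ} {φ g : ℝ → ℝ}

theorem mul_setIntegral_Icc_eq_setIntegral_indicator {y : ℝ} (hy : y ∈ Icc a b) :
    g y * ∫ t in Icc a y, φ t ∂μ = ∫ t in Icc a b, g y * (Iic y).indicator φ t ∂μ := by
  rw [integral_const_mul, setIntegral_indicator measurableSet_Iic,
    show Icc a b ∩ Iic y = Icc a y by ext; simp only [mem_inter_iff, mem_Icc, mem_Iic]; grind]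

theorem integrable_mul_indicator_Iic (hφ : IntegrableOn φ (Icc a b) μ)
    (hg : IntegrableOn g (Icc a b) ν) :
    Integrable (fun p : ℝ × ℝ => g p.1 * (Iic p.1).indicator φ p.2)
      ((ν.restrict (Icc a b)).prod (μ.restrict (Icc a b))) := by
  refine ((hg.mul_prod hφ).indicator (measurableSet_le measurable_snd measurable_fst)).congr
    (ae_of_all _ fun p => ?_)
  by_cases h : p.2 ≤ p.1 <;> simp [h]

theorem integrableOn_mul_setIntegral_Icc [SFinite μ] (hφ : IntegrableOn φ (Icc a b) μ)
    (hg : IntegrableOn g (Icc a b) ν) :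
    IntegrableOn (fun y => g y * ∫ t in Icc a y, φ t ∂μ) (Icc a b) ν :=
  (integrable_mul_indicator_Iic hφ hg).integral_prod_left.congr
    ((ae_restrict_mem measurableSet_Icc).mono fun _ hy =>
      (mul_setIntegral_Icc_eq_setIntegral_indicator hy).symm)

theorem setIntegral_mul_setIntegral_Icc_comm [SFinite μ] [SFinite ν]
    (hφ : IntegrableOn φ (Icc a b) μ) (hg : IntegrableOn g (Icc a b) ν) :
    ∫ y in Icc a b, g y * ∫ t in Icc a y, φ t ∂μ ∂ν
      = ∫ t in Icc a b, φ t * ∫ y in Icc t b, g y ∂ν ∂μ := by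
  have hR : ∀ t ∈ Icc a b, φ t * ∫ y in Icc t b, g y ∂ν
      = ∫ y in Icc a b, g y * (Iic y).indicator φ t ∂ν := fun t ht => by
    rw [← show Icc a b ∩ Ici t = Icc t b by ext; simp only [mem_inter_iff, mem_Icc, mem_Ici]; grind,
      ← setIntegral_indicator measurableSet_Ici, ← integral_const_mul]
    congr 1; ext y
    by_cases h : t ≤ y <;> simp [h, mul_comm]
  rw [setIntegral_congr_fun measurableSet_Icc fun _ => mul_setIntegral_Icc_eq_setIntegral_indicator,
    setIntegral_congr_fun measurableSet_Icc hR]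
  exact integral_integral_swap (integrable_mul_indicator_Iic hφ hg)

end Triangle

theorem measureReal_Icc_eq_Fdist_sub {μ : Measure ℝ} [IsFiniteMeasure μ] [NullSingletonClass μ]
    {y z : ℝ} (hz : 0 ≤ z) (hzy : z ≤ y) : μ.real (Icc z y) = Fdist μ y - Fdist μ z := by
  have hsplit : μ.real (Icc 0 y) = μ.real (Ico 0 z) + μ.real (Icc z y) :=
    (Ico_union_Icc_eq_Icc hz hzy) ▸
      measureReal_union (disjoint_left.2 fun _ h₁ h₂ => h₁.2.not_ge h₂.1) measurableSet_Icc
  rw [measureReal_congr Ico_ae_eq_Icc] at hsplit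
  simp only [Fdist, ← measureReal_def]
  linarith

theorem ae_measure_singleton_eq_zero (μ ν : Measure ℝ) [NullSingletonClass μ] [SFinite ν] :
    ∀ᵐ t ∂μ, ν {t} = 0 := by
  have := (Measure.countable_meas_level_set_pos (μ := ν) measurable_id).measure_zero μ
  simpa [ae_iff, pos_iff_ne_zero] using this

noncomputable def cumIntegral (ν : Measure ℝ) (g : ℝ → ℝ) (t : ℝ) : ℝ := ∫ z in Icc 0 t, g z ∂ν

section CumIntegral

variable {μ ν : Measure ℝ} {g : ℝ → ℝ}

theorem abs_cumIntegral_le {b t : ℝ} (hg : IntegrableOn g (Icc 0 b) ν) (ht : t ≤ b) :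
    |cumIntegral ν g t| ≤ ∫ z in Icc 0 b, |g z| ∂ν :=
  (abs_integral_le_integral_abs).trans <|
    setIntegral_mono_set hg.abs (ae_of_all _ fun _ => abs_nonneg _)
      (Icc_subset_Icc_right ht).eventuallyLE

theorem memLp_top_cumIntegral [IsFiniteMeasure μ] [SFinite ν] {b : ℝ}
    (hg : IntegrableOn g (Icc 0 b) ν) : MemLp (cumIntegral ν g) ⊤ (μ.restrict (Icc 0 b)) := by
  have hm : IntegrableOn (fun t => 1 * ∫ z in Icc 0 t, g z ∂ν) (Icc 0 b) μ :=
    integrableOn_mul_setIntegral_Icc hg (integrableOn_const (C := 1) (measure_ne_top _ _))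
  simp only [one_mul] at hm
  exact memLp_top_of_bound hm.aestronglyMeasurable _
    ((ae_restrict_mem measurableSet_Icc).mono fun t ht => abs_cumIntegral_le hg ht.2)

theorem setIntegral_Icc_eq_cumIntegral_sub {b t : ℝ} (hg : IntegrableOn g (Icc 0 b) ν)
    (ht : t ∈ Icc 0 b) (hνt : ν {t} = 0) :
    ∫ y in Icc t b, g y ∂ν = cumIntegral ν g b - cumIntegral ν g t := by
  have hsplit := setIntegral_union₀ (f := g) (μ := ν)
    (by rw [AEDisjoint, Icc_inter_Icc_eq_singleton ht.1 ht.2]; exact hνt)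
    measurableSet_Icc.nullMeasurableSet (hg.mono_set (Icc_subset_Icc_right ht.2))
    (hg.mono_set (Icc_subset_Icc_left ht.1))
  rw [Icc_union_Icc_eq_Icc ht.1 ht.2] at hsplit
  simp only [cumIntegral, hsplit]
  ring

end CumIntegral

section KreinFeller

variable {μ ν : Measure ℝ} [IsFiniteMeasure μ] [NullSingletonClass μ] [SFinite ν] {g : ℝ → ℝ}

theorem setIntegral_Fdist_sub_mul_eq_setIntegral_cumIntegral {x : ℝ}
    (hg : IntegrableOn g (Icc 0 x) ν) :
    ∫ y in Icc 0 x, (Fdist μ x - Fdist μ y) * g y ∂ν = ∫ t in Icc 0 x, cumIntegral ν g t ∂μ := by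
  have hswap := setIntegral_mul_setIntegral_Icc_comm (μ := ν) (ν := μ) (g := fun _ => 1) hg
    (integrableOn_const (measure_ne_top _ _))
  simp only [one_mul, setIntegral_const, smul_eq_mul, mul_one] at hswap
  rw [setIntegral_congr_fun measurableSet_Icc fun y hy => by
    rw [← measureReal_Icc_eq_Fdist_sub hy.1 hy.2, mul_comm]]
  exact hswap.symm

theorem eq_add_setIntegral_cumIntegral {f : ℝ → ℝ} {b : ℝ} (hg : IntegrableOn g (Icc 0 1) ν)
    (hf : ∀ x ∈ Icc (0:ℝ) 1,
      f x = f 0 + b * Fdist μ x + ∫ y in Icc 0 x, (Fdist μ x - Fdist μ y) * g y ∂ν) :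
    ∀ x ∈ Icc (0:ℝ) 1, f x = f 0 + ∫ t in Icc 0 x, (b + cumIntegral ν g t) ∂μ := by
  intro x hx
  have hsub : Icc 0 x ⊆ Icc (0:ℝ) 1 := Icc_subset_Icc_right hx.2
  have hH : IntegrableOn (cumIntegral ν g) (Icc 0 1) μ :=
    (memLp_top_cumIntegral hg).integrable le_top
  rw [hf x hx, setIntegral_Fdist_sub_mul_eq_setIntegral_cumIntegral (hg.mono_set hsub),
    integral_add (integrable_const b) (hH.mono_set hsub),
    setIntegral_const, smul_eq_mul, Fdist, measureReal_def]
  ring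

theorem setIntegral_mul_eq_boundary_sub_energy {f : ℝ → ℝ} {b : ℝ}
    (hg : IntegrableOn g (Icc 0 1) ν)
    (hf : ∀ x ∈ Icc (0:ℝ) 1, f x = f 0 + ∫ t in Icc 0 x, (b + cumIntegral ν g t) ∂μ) :
    ∫ y in Icc 0 1, g y * f y ∂ν
      = f 1 * (b + cumIntegral ν g 1) - f 0 * b
        - ∫ t in Icc 0 1, (b + cumIntegral ν g t) ^ 2 ∂μ := by
  set H := cumIntegral ν g
  have hφ : MemLp (fun t => b + H t) ⊤ (μ.restrict (Icc 0 1)) :=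
    (memLp_top_const b).add (memLp_top_cumIntegral hg)
  have hφi : IntegrableOn (fun t => b + H t) (Icc 0 1) μ := hφ.integrable le_top
  have hφ2 : IntegrableOn (fun t => (b + H t) ^ 2) (Icc 0 1) μ := by
    have := (hφ.mul hφ).integrable le_top
    simp only [← sq] at this
    exact this
  have hφ1 : ∫ t in Icc 0 1, (b + H t) ∂μ = f 1 - f 0 := by
    linarith [hf 1 ⟨zero_le_one, le_rfl⟩]
  have hgf : ∀ y ∈ Icc (0:ℝ) 1,
      g y * f y = f 0 * g y + g y * ∫ t in Icc 0 y, (b + H t) ∂μ := fun y hy => by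
    rw [hf y hy]; ring
  have htail : ∀ᵐ t ∂μ, t ∈ Icc (0:ℝ) 1 →
      (b + H t) * ∫ y in Icc t 1, g y ∂ν = (H 1 + b) * (b + H t) - (b + H t) ^ 2 :=
    (ae_measure_singleton_eq_zero μ ν).mono fun t hνt ht => by
      rw [setIntegral_Icc_eq_cumIntegral_sub hg ht hνt]; ring
  rw [setIntegral_congr_fun measurableSet_Icc hgf,
    integral_add (hg.const_mul _) (integrableOn_mul_setIntegral_Icc hφi hg), integral_const_mul,
    setIntegral_mul_setIntegral_Icc_comm hφi hg, setIntegral_congr_ae measurableSet_Icc htail,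
    integral_sub (hφi.const_mul _) hφ2, integral_const_mul, hφ1]
  simp only [H, cumIntegral]
  ring

end KreinFeller

theorem mul_nonneg_of_mul_cos_sub_mul_sin_eq_zero {a b θ : ℝ} (hθ : θ ∈ Icc 0 (Real.pi / 2))
    (h : a * Real.cos θ - b * Real.sin θ = 0) : 0 ≤ a * b := by
  have hsin : 0 ≤ Real.sin θ :=
    Real.sin_nonneg_of_nonneg_of_le_pi hθ.1 (hθ.2.trans (by linarith [Real.pi_pos]))
  have hcos : 0 ≤ Real.cos θ := Real.cos_nonneg_of_mem_Icc ⟨by linarith [hθ.1, Real.pi_pos], hθ.2⟩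
  have : a * b = Real.sin θ * Real.cos θ * (a ^ 2 + b ^ 2) := by
    linear_combination (b * Real.cos θ - a * Real.sin θ) * h - a * b * Real.sin_sq_add_cos_sq θ
  rw [this]; positivity

theorem stmt_11_general (μ ν : Measure ℝ) [IsProbabilityMeasure μ] [IsProbabilityMeasure ν] [NullSingletonClass μ]
    (f fΔ : ℝ → ℝ) (bf : ℝ) (hfΔ : Continuous fΔ)
    (hf : ∀ x ∈ Set.Icc (0:ℝ) 1,
      f x = f 0 + bf * Fdist μ x + ∫ y in Set.Icc 0 x, (Fdist μ x - Fdist μ y) * fΔ y ∂ν)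
    (α β : ℝ) (hα : α ∈ Set.Icc 0 (Real.pi/2)) (hβ : β ∈ Set.Icc 0 (Real.pi/2))
    (hfbc0 : f 0 * Real.cos α - bf * Real.sin α = 0)
    (hfbc1 : f 1 * Real.cos β + (bf + ∫ y in Set.Icc (0:ℝ) 1, fΔ y ∂ν) * Real.sin β = 0) :
    ∫ y in Set.Icc (0:ℝ) 1, fΔ y * f y ∂ν ≤ 0 := by
  have hg : IntegrableOn fΔ (Icc 0 1) ν := hfΔ.integrableOn_Icc
  rw [setIntegral_mul_eq_boundary_sub_energy hg (eq_add_setIntegral_cumIntegral hg hf)]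
  have hbc0 : 0 ≤ f 0 * bf := mul_nonneg_of_mul_cos_sub_mul_sin_eq_zero hα hfbc0
  have hbc1 : 0 ≤ f 1 * -(bf + cumIntegral ν fΔ 1) :=
    mul_nonneg_of_mul_cos_sub_mul_sin_eq_zero hβ (by rw [cumIntegral]; linarith)
  have henergy : 0 ≤ ∫ t in Icc 0 1, (bf + cumIntegral ν fΔ t) ^ 2 ∂μ :=
    setIntegral_nonneg measurableSet_Icc fun _ _ => sq_nonneg _
  rw [mul_neg] at hbc1
  linarith

theorem stmt_11 (μ ν : Measure ℝ) [IsProbabilityMeasure μ] [IsProbabilityMeasure ν] [NullSingletonClass μ]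
    (hμc : μ (Set.Icc (0:ℝ) 1)ᶜ = 0) (hνc : ν (Set.Icc (0:ℝ) 1)ᶜ = 0)
    (hν0 : ν {(0:ℝ)} = 0) (hν1 : ν {(1:ℝ)} = 0)
    (hsupp : msupport ν ⊆ msupport μ)
    (f fΔ : ℝ → ℝ) (bf : ℝ) (hfΔ : Continuous fΔ)
    (hf : ∀ x ∈ Set.Icc (0:ℝ) 1,
      f x = f 0 + bf * Fdist μ x + ∫ y in Set.Icc 0 x, (Fdist μ x - Fdist μ y) * fΔ y ∂ν)
    (α β : ℝ) (hα : α ∈ Set.Icc 0 (Real.pi/2)) (hβ : β ∈ Set.Icc 0 (Real.pi/2))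
    (hfbc0 : f 0 * Real.cos α - bf * Real.sin α = 0)
    (hfbc1 : f 1 * Real.cos β + (bf + ∫ y in Set.Icc (0:ℝ) 1, fΔ y ∂ν) * Real.sin β = 0) :
    ∫ y in Set.Icc (0:ℝ) 1, fΔ y * f y ∂ν ≤ 0 :=
  stmt_11_general μ ν f fΔ bf hfΔ hf α β hα hβ hfbc0 hfbc1
end

section
/- For every bounded measurable g : [0,1] → ℝ and every x ∈ [0,1], the identity ∫_{[0,x]} (F_μ(x) − F_μ(y)) g(y) dν(y) = ∫_{[0,x]} ∫_{[0,y]} g(s) dν(s) dμ(y) holds, where μ is an atomless Borel probability measure on [0,1] with distribution function F_μ and ν is a Borel probability measure on [0,1]. -/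
open MeasureTheory Set Filter

/-!
Write the inner integral `∫_{[0,y]} g dν` as the integral over `[0,x]` of `1_{t ≤ y} g(t)`.
The kernel `(y, t) ↦ 1_{t ≤ y} g(t)` is integrable for the product of the restricted measures,
so by Fubini the order of integration can be swapped, and integrating out `y` leaves
`μ([t,x]) g(t)`. Since `μ` has no atoms, `μ([t,x]) = F_μ(x) - F_μ(t)`.
-/

theorem Fdist_sub_Fdist_eq_measureReal_Icc (μ : Measure ℝ) [IsFiniteMeasure μ]
    [NullSingletonClass μ] {s x : ℝ} (hs : 0 ≤ s) (hsx : s ≤ x) :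
    Fdist μ x - Fdist μ s = μ.real (Icc s x) := by
  have hsplit : μ.real (Icc 0 x) = μ.real (Icc 0 s) + μ.real (Ioc s x) := by
    rw [← Icc_union_Ioc_eq_Icc hs hsx, measureReal_union _ measurableSet_Ioc]
    exact (Iic_disjoint_Ioc le_rfl).mono_left Icc_subset_Iic_self
  rw [← measureReal_congr (Ioc_ae_eq_Icc (μ := μ))]
  simp only [Fdist, ← measureReal_def] at hsplit ⊢
  linarith

theorem setIntegral_setIntegral_Icc_swap (μ ν : Measure ℝ) [IsFiniteMeasure μ] [SFinite ν]
    {g : ℝ → ℝ} {a x : ℝ} (hg : IntegrableOn g (Icc a x) ν) :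
    ∫ y in Icc a x, (∫ t in Icc a y, g t ∂ν) ∂μ =
      ∫ t in Icc a x, μ.real (Icc t x) * g t ∂ν := by
  set K : ℝ × ℝ → ℝ := {p | p.2 ≤ p.1}.indicator fun p => g p.2
  have hK_meas : MeasurableSet {p : ℝ × ℝ | p.2 ≤ p.1} :=
    measurableSet_le measurable_snd measurable_fst
  have hK_int : Integrable (Function.uncurry fun y t => K (y, t))
      ((μ.restrict (Icc a x)).prod (ν.restrict (Icc a x))) :=
    (hg.comp_snd _).indicator hK_meas
  have hinner : ∀ y ∈ Icc a x, ∫ t in Icc a y, g t ∂ν = ∫ t in Icc a x, K (y, t) ∂ν := by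
    intro y hy
    have hK : ∀ t, K (y, t) = (Iic y).indicator g t := fun t => by
      simp only [K, indicator_apply, mem_ofPred_eq, mem_Iic]
    have hset : Icc a x ∩ Iic y = Icc a y := by
      ext t
      simp only [mem_inter_iff, mem_Icc, mem_Iic]
      exact ⟨fun h => ⟨h.1.1, h.2⟩, fun h => ⟨⟨h.1, h.2.trans hy.2⟩, h.2⟩⟩
    simp_rw [hK, setIntegral_indicator measurableSet_Iic, hset]
  have houter : ∀ t ∈ Icc a x, ∫ y in Icc a x, K (y, t) ∂μ = μ.real (Icc t x) * g t := by
    intro t ht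
    have hK : ∀ y, K (y, t) = (Ici t).indicator (fun _ => g t) y := fun y => by
      simp only [K, indicator_apply, mem_ofPred_eq, mem_Ici]
    have hset : Icc a x ∩ Ici t = Icc t x := by
      ext y
      simp only [mem_inter_iff, mem_Icc, mem_Ici]
      exact ⟨fun h => ⟨h.2, h.1.2⟩, fun h => ⟨⟨ht.1.trans h.1, h.2⟩, h.1⟩⟩
    simp_rw [hK, setIntegral_indicator measurableSet_Ici, setIntegral_const, hset, smul_eq_mul]
  rw [setIntegral_congr_fun measurableSet_Icc hinner, integral_integral_swap hK_int]
  exact setIntegral_congr_fun measurableSet_Icc houter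

theorem stmt_13_general (μ ν : Measure ℝ) [IsProbabilityMeasure μ] [IsProbabilityMeasure ν]
    [NullSingletonClass μ]
    (g : ℝ → ℝ) (hmeas : Measurable g) (C : ℝ) (hbd : ∀ y, |g y| ≤ C) :
    ∀ x ∈ Set.Icc (0:ℝ) 1,
      ∫ y in Set.Icc 0 x, (Fdist μ x - Fdist μ y) * g y ∂ν =
        ∫ y in Set.Icc 0 x, (∫ t in Set.Icc 0 y, g t ∂ν) ∂μ := by
  intro x _
  have hg : IntegrableOn g (Icc 0 x) ν :=
    Integrable.of_bound hmeas.aestronglyMeasurable C (ae_of_all _ hbd)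
  rw [setIntegral_setIntegral_Icc_swap μ ν hg]
  refine setIntegral_congr_fun measurableSet_Icc fun t ht => ?_
  rw [Fdist_sub_Fdist_eq_measureReal_Icc μ ht.1 ht.2]

theorem stmt_13 (μ ν : Measure ℝ) [IsProbabilityMeasure μ] [IsProbabilityMeasure ν]
    [NullSingletonClass μ] (hμc : μ (Set.Icc (0:ℝ) 1)ᶜ = 0) (hνc : ν (Set.Icc (0:ℝ) 1)ᶜ = 0)
    (g : ℝ → ℝ) (hmeas : Measurable g) (C : ℝ) (hbd : ∀ y, |g y| ≤ C) :
    ∀ x ∈ Set.Icc (0:ℝ) 1,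
      ∫ y in Set.Icc 0 x, (Fdist μ x - Fdist μ y) * g y ∂ν =
        ∫ y in Set.Icc 0 x, (∫ t in Set.Icc 0 y, g t ∂ν) ∂μ :=
  stmt_13_general μ ν g hmeas C hbd
end
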